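/- arXiv:2509.02302 — 6 statements merged into one kernel-verified Lean document; each statement's English description precedes it below -/
import Mathlib

section
/- In the online lead-time quotation problem OLTQ with patience limit ℓ, for any two histories I = (e_{1:m-1}, a_{1:m-1}) and I' = (e'_{1:m-1}, a'_{1:m-1}) and any request suffix e_{m:n} and action suffix a_{m:n}, the cumulative rewards differ by at most 2ℓ²: Val(OLTQ^I, e_{m:n}, a_{m:n}) ≥ Val(OLTQ^{I'}, e_{m:n}, a_{m:n}) - 2ℓ². In particular OLTQ is 2ℓ-bounded-influence (with per-period reward bound L = ℓ). -/
/-!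
Only the requests that arrived in the last `ℓ - 1` periods can be processed at period `t`,
so from period `m + ℓ - 1` on the reward no longer sees the history before `m`. Each of the
at most `ℓ - 1` earlier periods of the window has reward at most `ℓ`, because at most one
request is served per period; this gives the bound `ℓ² ≤ 2ℓ²`.
-/

/-- Per-period reward of the online lead-time quotation (OLTQ) problem with patience
limit `ℓ`: at period `t` the reward is `ℓ - (a_s(i) - s)` for the (unique) request
`(s, i)` scheduled at processing time `t` that is not blocked by an earlier accepted
request, and `0` otherwise.  `a s i = none` represents quoting an infinite lead time. -/
def Rolt (ℓ : ℕ) (e : ℕ → ℕ) (a : ℕ → ℕ → Option ℕ) (t : ℕ) : ℕ :=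
  ∑ s ∈ Finset.Icc 1 t, ∑ i ∈ Finset.Icc 1 (e s),
    if a s i = some t ∧
        (∀ j ∈ Finset.Ico 1 s, ∀ k ∈ Finset.Icc 1 (e j), a j k ≠ some t) ∧
        (∀ k ∈ Finset.Ico 1 i, a s k ≠ some t)
    then s + ℓ - t else 0

open Finset

theorem Finset.sum_le_of_forall_le_of_ne_zero_unique {ι M : Type*}
    [AddCommMonoid M] [PartialOrder M] [CanonicallyOrderedAdd M]
    {s : Finset ι} {f : ι → M} {B : M} (hB : ∀ i ∈ s, f i ≤ B)
    (hu : ∀ i ∈ s, ∀ j ∈ s, f i ≠ 0 → f j ≠ 0 → i = j) :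
    ∑ i ∈ s, f i ≤ B := by
  by_cases hex : ∃ i ∈ s, f i ≠ 0
  · obtain ⟨i, hi, hi0⟩ := hex
    rw [sum_eq_single_of_mem i hi fun j hj hji => not_not.mp fun hj0 => hji (hu j hj i hi hj0 hi0)]
    exact hB i hi
  · push Not at hex
    rw [sum_eq_zero hex]
    exact zero_le

/-- `(s, i)` is the first request, in arrival order, quoted processing time `t`, hence the one
processed at `t`. -/
def ServedAt (e : ℕ → ℕ) (a : ℕ → ℕ → Option ℕ) (t s i : ℕ) : Prop :=
  a s i = some t ∧
    (∀ j ∈ Ico 1 s, ∀ k ∈ Icc 1 (e j), a j k ≠ some t) ∧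
    (∀ k ∈ Ico 1 i, a s k ≠ some t)

instance (e : ℕ → ℕ) (a : ℕ → ℕ → Option ℕ) (t s i : ℕ) : Decidable (ServedAt e a t s i) :=
  inferInstanceAs (Decidable (_ ∧ _))

theorem Rolt_eq_sum_servedAt (ℓ : ℕ) (e : ℕ → ℕ) (a : ℕ → ℕ → Option ℕ) (t : ℕ) :
    Rolt ℓ e a t = ∑ s ∈ Icc 1 t, ∑ i ∈ Icc 1 (e s),
      if ServedAt e a t s i then s + ℓ - t else 0 := rfl

theorem ServedAt.unique {e : ℕ → ℕ} {a : ℕ → ℕ → Option ℕ} {t s i s' i' : ℕ}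
    (hi : i ∈ Icc 1 (e s)) (hi' : i' ∈ Icc 1 (e s')) (hs : 1 ≤ s) (hs' : 1 ≤ s')
    (h : ServedAt e a t s i) (h' : ServedAt e a t s' i') : s = s' ∧ i = i' := by
  have hi1 := (mem_Icc.mp hi).1
  have hi1' := (mem_Icc.mp hi').1
  rcases lt_trichotomy s s' with hlt | rfl | hlt
  · exact absurd h.1 (h'.2.1 s (mem_Ico.mpr ⟨hs, hlt⟩) i hi)
  · refine ⟨rfl, ?_⟩
    rcases lt_trichotomy i i' with hlt | heq | hlt
    · exact absurd h.1 (h'.2.2 i (mem_Ico.mpr ⟨hi1, hlt⟩))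
    · exact heq
    · exact absurd h'.1 (h.2.2 i' (mem_Ico.mpr ⟨hi1', hlt⟩))
  · exact absurd h'.1 (h.2.1 s' (mem_Ico.mpr ⟨hs', hlt⟩) i' hi')

theorem Rolt_le (ℓ : ℕ) (e : ℕ → ℕ) (a : ℕ → ℕ → Option ℕ) (t : ℕ) : Rolt ℓ e a t ≤ ℓ := by
  rw [Rolt_eq_sum_servedAt, sum_sigma']
  refine sum_le_of_forall_le_of_ne_zero_unique ?_ ?_
  · rintro ⟨s, i⟩ hsi
    have hst : s ≤ t := (mem_Icc.mp (mem_sigma.mp hsi).1).2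
    dsimp only
    split_ifs <;> omega
  · rintro ⟨s, i⟩ hsi ⟨s', i'⟩ hsi' h0 h0'
    obtain ⟨hs, hi⟩ := mem_sigma.mp hsi
    obtain ⟨hs', hi'⟩ := mem_sigma.mp hsi'
    obtain ⟨rfl, rfl⟩ := ServedAt.unique hi hi' (mem_Icc.mp hs).1 (mem_Icc.mp hs').1
      (of_not_not fun h => h0 (if_neg h)) (of_not_not fun h => h0' (if_neg h))
    rfl

section Agreement

variable {m t : ℕ} {e e' : ℕ → ℕ} {a a' : ℕ → ℕ → Option ℕ}

theorem servedAt_iff_of_agree (hpre : ∀ j < m, ∀ k, a j k ≠ some t)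
    (hpre' : ∀ j < m, ∀ k, a' j k ≠ some t)
    (hee : ∀ s, m ≤ s → e s = e' s) (haa : ∀ s, m ≤ s → a s = a' s)
    {s i : ℕ} (hs : m ≤ s) : ServedAt e a t s i ↔ ServedAt e' a' t s i := by
  unfold ServedAt
  rw [haa s hs]
  refine and_congr_right fun _ => and_congr_left fun _ => forall₂_congr fun j _ => ?_
  by_cases hj : m ≤ j
  · rw [hee j hj, haa j hj]
  · push Not at hj
    exact iff_of_true (fun k _ => hpre j hj k) (fun k _ => hpre' j hj k)

theorem Rolt_eq_of_agree {ℓ : ℕ}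
    (hrange : ∀ s i x, a s i = some x → s ≤ x ∧ x < s + ℓ)
    (hrange' : ∀ s i x, a' s i = some x → s ≤ x ∧ x < s + ℓ)
    (hee : ∀ s, m ≤ s → e s = e' s) (haa : ∀ s, m ≤ s → a s = a' s)
    (ht : m + ℓ ≤ t + 1) : Rolt ℓ e a t = Rolt ℓ e' a' t := by
  have hpre : ∀ j < m, ∀ k, a j k ≠ some t := fun j hj k h => by
    have := hrange j k t h; omega
  have hpre' : ∀ j < m, ∀ k, a' j k ≠ some t := fun j hj k h => by
    have := hrange' j k t h; omega
  rw [Rolt_eq_sum_servedAt, Rolt_eq_sum_servedAt]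
  refine sum_congr rfl fun s _ => ?_
  by_cases hs : m ≤ s
  · rw [hee s hs]
    exact sum_congr rfl fun i _ => if_congr (servedAt_iff_of_agree hpre hpre' hee haa hs) rfl rfl
  · push Not at hs
    rw [sum_eq_zero fun i _ => if_neg fun h => hpre s hs i h.1,
      sum_eq_zero fun i _ => if_neg fun h => hpre' s hs i h.1]

theorem sum_Rolt_le_sum_Rolt_add {ℓ n : ℕ}
    (hrange : ∀ s i x, a s i = some x → s ≤ x ∧ x < s + ℓ)
    (hrange' : ∀ s i x, a' s i = some x → s ≤ x ∧ x < s + ℓ)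
    (hee : ∀ s, m ≤ s → e s = e' s) (haa : ∀ s, m ≤ s → a s = a' s) :
    ∑ t ∈ Icc m n, Rolt ℓ e' a' t ≤ ∑ t ∈ Icc m n, Rolt ℓ e a t + ℓ * ℓ := by
  rw [← sum_filter_add_sum_filter_not (Icc m n) (fun t => t + 1 < m + ℓ)]
  have hearly : #{t ∈ Icc m n | t + 1 < m + ℓ} ≤ ℓ := by
    calc #{t ∈ Icc m n | t + 1 < m + ℓ} ≤ #(Ico m (m + ℓ)) :=
          card_le_card fun t ht => by
            simp only [mem_filter, mem_Icc, mem_Ico] at ht ⊢; omega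
      _ = ℓ := by simp
  have hearly_sum : ∑ t ∈ Icc m n with t + 1 < m + ℓ, Rolt ℓ e' a' t ≤ ℓ * ℓ :=
    (sum_le_card_nsmul _ _ ℓ fun t _ => Rolt_le ℓ e' a' t).trans
      (Nat.mul_le_mul_right ℓ hearly)
  have hlate : ∑ t ∈ Icc m n with ¬(t + 1 < m + ℓ), Rolt ℓ e' a' t
      = ∑ t ∈ Icc m n with ¬(t + 1 < m + ℓ), Rolt ℓ e a t :=
    sum_congr rfl fun t ht =>
      (Rolt_eq_of_agree hrange hrange' hee haa (not_lt.mp (mem_filter.mp ht).2)).symm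
  have hsub : ∑ t ∈ Icc m n with ¬(t + 1 < m + ℓ), Rolt ℓ e a t ≤ ∑ t ∈ Icc m n, Rolt ℓ e a t :=
    sum_le_sum_of_subset (filter_subset _ _)
  omega

end Agreement

theorem stmt_8_general (ℓ m n : ℕ)
    (e e' : ℕ → ℕ) (a a' : ℕ → ℕ → Option ℕ)
    (hrange : ∀ s i x, a s i = some x → s ≤ x ∧ x < s + ℓ)
    (hrange' : ∀ s i x, a' s i = some x → s ≤ x ∧ x < s + ℓ)
    (hee : ∀ s, m ≤ s → e s = e' s) (haa : ∀ s, m ≤ s → a s = a' s) :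
    ((∑ t ∈ Finset.Icc m n, Rolt ℓ e a t : ℕ) : ℝ)
      ≥ ((∑ t ∈ Finset.Icc m n, Rolt ℓ e' a' t : ℕ) : ℝ) - 2 * (ℓ : ℝ) ^ 2 := by
  have hcast : ((∑ t ∈ Icc m n, Rolt ℓ e' a' t : ℕ) : ℝ)
      ≤ (∑ t ∈ Icc m n, Rolt ℓ e a t : ℕ) + (ℓ : ℝ) * ℓ := by
    exact_mod_cast sum_Rolt_le_sum_Rolt_add hrange hrange' hee haa
  nlinarith [sq_nonneg (ℓ : ℝ)]

/-- OLTQ is 2ℓ²-bounded-influence: for any two histories before period `m`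
(same requests and actions from period `m` onwards), the cumulative rewards over any
window `m, …, n` differ by at most `2ℓ²`. -/
theorem stmt_8 (ℓ m n : ℕ) (hℓ : 1 ≤ ℓ) (hm : 1 ≤ m)
    (e e' : ℕ → ℕ) (a a' : ℕ → ℕ → Option ℕ)
    (he : ∀ s, e s ≤ ℓ) (he' : ∀ s, e' s ≤ ℓ)
    (hrange : ∀ s i x, a s i = some x → s ≤ x ∧ x < s + ℓ)
    (hrange' : ∀ s i x, a' s i = some x → s ≤ x ∧ x < s + ℓ)
    (hee : ∀ s, m ≤ s → e s = e' s) (haa : ∀ s, m ≤ s → a s = a' s) :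
    ((∑ t ∈ Finset.Icc m n, Rolt ℓ e a t : ℕ) : ℝ)
      ≥ ((∑ t ∈ Finset.Icc m n, Rolt ℓ e' a' t : ℕ) : ℝ) - 2 * (ℓ : ℝ) ^ 2 :=
  stmt_8_general ℓ m n e e' a a' hrange hrange' hee haa
end

section
/- The k-server problem kSE_S on a metric space with distances in [0,1] is (2,2)-Lipschitz: for any history I, any two possible requests e_m and e'_m at period m, and any continuation e_{m+1:n}, |Opt(kSE_S^I, e_m∘e_{m+1:n}) - Opt(kSE_S^I, e'_m∘e_{m+1:n})| ≤ 2·d(e_m, e'_m). -/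
/-!
Fix the server choices `a`. If the request sequences `f` and `f'` differ only at period `s`, the
two executions differ only at server `a s`. The quantity
`|kVal f - kVal f'| + dist (kpos f (a s)) (kpos f' (a s))` increases by at most `2·d(f s, f' s)`
at period `s` and never increases elsewhere: when server `a s` is moved again, the configurations
merge and the cost gap grows by at most their old distance there. Hence every fixed `a` costs
within `2·d(f s, f' s)` on both sequences, and so do the infima over `a`.
-/

/-- Server configuration after `t` periods in the k-server problem. -/
def kpos {X : Type*} {k : ℕ} (S : Fin k → X) (e : ℕ → X) (a : ℕ → Fin k) :
    ℕ → Fin k → X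
  | 0 => S
  | t + 1 => Function.update (kpos S e a t) (a (t + 1)) (e (t + 1))

/-- Total movement cost of an execution of the k-server problem over periods 1..N. -/
noncomputable def kVal {X : Type*} [MetricSpace X] {k : ℕ} (S : Fin k → X)
    (e : ℕ → X) (a : ℕ → Fin k) (N : ℕ) : ℝ :=
  ∑ t ∈ Finset.Icc 1 N, dist (kpos S e a (t - 1) (a t)) (e t)

/-- Hindsight optimal cost of the k-server problem. -/
noncomputable def kOpt {X : Type*} [MetricSpace X] {k : ℕ} (S : Fin k → X)
    (e : ℕ → X) (N : ℕ) : ℝ :=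
  ⨅ a : ℕ → Fin k, kVal S e a N

open Finset Set

lemma Real.abs_iInf_sub_iInf_le {ι : Type*} {u v : ι → ℝ} {c : ℝ} (hc : 0 ≤ c)
    (hu : BddBelow (range u)) (hv : BddBelow (range v)) (h : ∀ i, |u i - v i| ≤ c) :
    |(⨅ i, u i) - ⨅ i, v i| ≤ c := by
  rcases isEmpty_or_nonempty ι with hι | hι
  · simpa using hc
  have hle : ∀ {p q : ι → ℝ}, BddBelow (range p) → (∀ i, |p i - q i| ≤ c) →
      (⨅ i, p i) ≤ (⨅ i, q i) + c := fun hp hpq => by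
    rw [← sub_le_iff_le_add]
    exact le_ciInf fun i => by linarith [ciInf_le hp i, (abs_le.mp (hpq i)).2]
  rw [abs_sub_le_iff]
  constructor
  · linarith [hle hu h]
  · linarith [hle hv fun i => abs_sub_comm (u i) (v i) ▸ h i]

lemma sum_dist_le_of_eq_of_ne {X : Type*} [PseudoMetricSpace X] {f f' : ℕ → X} {s : ℕ}
    (hf : ∀ t, t ≠ s → f t = f' t) (I : Finset ℕ) :
    ∑ t ∈ I, dist (f t) (f' t) ≤ dist (f s) (f' s) := by
  calc ∑ t ∈ I, dist (f t) (f' t)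
      = ∑ t ∈ I, if s = t then dist (f s) (f' s) else 0 := by
        refine sum_congr rfl fun t _ => ?_
        split_ifs with hst
        · rw [hst]
        · rw [hf t (Ne.symm hst), dist_self]
    _ = if s ∈ I then dist (f s) (f' s) else 0 := sum_ite_eq I s _
    _ ≤ dist (f s) (f' s) := by split_ifs <;> simp

section KServer

variable {X : Type*} {k : ℕ} (S : Fin k → X) (a : ℕ → Fin k)

lemma kpos_apply_eq_of_ne {f f' : ℕ → X} {s : ℕ} (hf : ∀ t, t ≠ s → f t = f' t)
    {i : Fin k} (hi : i ≠ a s) (t : ℕ) : kpos S f a t i = kpos S f' a t i := by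
  induction t with
  | zero => rfl
  | succ t ih =>
    simp only [kpos, Function.update_apply]
    split_ifs with h
    · exact hf _ fun hts => hi (hts ▸ h)
    · exact ih

variable [MetricSpace X]

lemma kVal_zero (e : ℕ → X) : kVal S e a 0 = 0 := by
  simp [kVal]

lemma kVal_succ (e : ℕ → X) (N : ℕ) :
    kVal S e a (N + 1) = kVal S e a N + dist (kpos S e a N (a (N + 1))) (e (N + 1)) := by
  rw [kVal, sum_Icc_succ_top (by omega)]
  rfl

lemma kVal_nonneg (e : ℕ → X) (N : ℕ) : 0 ≤ kVal S e a N :=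
  sum_nonneg fun _ _ => dist_nonneg

lemma bddBelow_range_kVal (e : ℕ → X) (N : ℕ) :
    BddBelow (range fun a => kVal S e a N) :=
  ⟨0, by rintro _ ⟨a, rfl⟩; exact kVal_nonneg S a e N⟩

lemma abs_kVal_sub_add_dist_succ_le {f f' : ℕ → X} {j : Fin k} {t : ℕ}
    (hj : ∀ i, i ≠ j → kpos S f a t i = kpos S f' a t i) :
    |kVal S f a (t + 1) - kVal S f' a (t + 1)|
        + dist (kpos S f a (t + 1) j) (kpos S f' a (t + 1) j)
      ≤ |kVal S f a t - kVal S f' a t| + dist (kpos S f a t j) (kpos S f' a t j)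
        + 2 * dist (f (t + 1)) (f' (t + 1)) := by
  have hcost := dist_dist_dist_le (kpos S f a t (a (t + 1))) (f (t + 1))
    (kpos S f' a t (a (t + 1))) (f' (t + 1))
  rw [Real.dist_eq] at hcost
  have hgap := abs_add_le (kVal S f a t - kVal S f' a t)
    (dist (kpos S f a t (a (t + 1))) (f (t + 1)) - dist (kpos S f' a t (a (t + 1))) (f' (t + 1)))
  rw [kVal_succ, kVal_succ, add_sub_add_comm]
  simp only [kpos]
  by_cases hij : a (t + 1) = j
  · subst hij
    simp only [Function.update_self]
    linarith
  · rw [Function.update_of_ne (Ne.symm hij), Function.update_of_ne (Ne.symm hij)]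
    rw [hj _ hij] at hcost hgap ⊢
    rw [dist_self] at hcost
    linarith [dist_nonneg (x := f (t + 1)) (y := f' (t + 1))]

lemma abs_kVal_sub_add_dist_le {f f' : ℕ → X} {j : Fin k}
    (hj : ∀ t, ∀ i, i ≠ j → kpos S f a t i = kpos S f' a t i) (n : ℕ) :
    |kVal S f a n - kVal S f' a n| + dist (kpos S f a n j) (kpos S f' a n j)
      ≤ 2 * ∑ t ∈ Icc 1 n, dist (f t) (f' t) := by
  induction n with
  | zero => simp [kVal_zero, kpos]
  | succ n ih =>
    rw [sum_Icc_succ_top (by omega), mul_add]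
    linarith [abs_kVal_sub_add_dist_succ_le S a (hj n)]

lemma abs_kVal_sub_le {f f' : ℕ → X} {s : ℕ} (hf : ∀ t, t ≠ s → f t = f' t) (n : ℕ) :
    |kVal S f a n - kVal S f' a n| ≤ 2 * dist (f s) (f' s) := by
  have hpot := abs_kVal_sub_add_dist_le S a
    (fun t _ hi => kpos_apply_eq_of_ne S a hf hi t) n
  linarith [sum_dist_le_of_eq_of_ne hf (Icc 1 n),
    dist_nonneg (x := kpos S f a n (a s)) (y := kpos S f' a n (a s))]

lemma abs_kOpt_sub_le {f f' : ℕ → X} {s : ℕ} (hf : ∀ t, t ≠ s → f t = f' t) (n : ℕ) :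
    |kOpt S f n - kOpt S f' n| ≤ 2 * dist (f s) (f' s) :=
  Real.abs_iInf_sub_iInf_le (by positivity) (bddBelow_range_kVal S f n)
    (bddBelow_range_kVal S f' n) fun a => abs_kVal_sub_le S a hf n

end KServer

theorem stmt_12_general {X : Type*} [MetricSpace X] (k : ℕ)
    (S : Fin k → X) (m : ℕ) (e : ℕ → X) (a : ℕ → Fin k)
    (n : ℕ) (f f' : ℕ → X) (hf : ∀ t, t ≠ 1 → f t = f' t) :
    |kOpt (kpos S e a m) f n - kOpt (kpos S e a m) f' n|
      ≤ 2 * dist (f 1) (f' 1) :=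
  abs_kOpt_sub_le (kpos S e a m) hf n

/-- The k-server problem (distances in [0,1]) is (2,2)-Lipschitz: after any history,
changing only the first request of the remaining window (from `f 1` to `f' 1`)
changes the hindsight optimal cost by at most `2·d(f 1, f' 1)`. -/
theorem stmt_12 {X : Type*} [MetricSpace X] (k : ℕ) (hk : 0 < k)
    (hb : ∀ x y : X, dist x y ≤ 1)
    (S : Fin k → X) (m : ℕ) (e : ℕ → X) (a : ℕ → Fin k)
    (n : ℕ) (f f' : ℕ → X) (hf : ∀ t, t ≠ 1 → f t = f' t) :
    |kOpt (kpos S e a m) f n - kOpt (kpos S e a m) f' n|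
      ≤ 2 * dist (f 1) (f' 1) :=
  stmt_12_general k S m e a n f f' hf
end

section
/- Let r_1,…,r_N, r'_1,…,r'_N ∈ {0,1} be two binary sequences satisfying: (a) if r_i = r'_i = 1 for some i, then r_j = r'_j for all j ≥ i; (b) whenever i < j, r_i = 0, r'_i = 1, r_t = r'_t = 0 for all i < t < j, and r'_j = 1, then r_j = 1; and (c) r_j ≥ r'_j whenever (r_j, r'_j) ≠ (0,1). Then Σ_{i=1}^N r_i ≥ (Σ_{i=1}^N r'_i) - 1. -/
/-!
Scan the periods from left to right and track the deficit `Σ r' - Σ r` of each prefix. It rises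
only at a period of type `(r, r') = (0, 1)`, and there is always at most one unit of deficit
outstanding. The prefix may carry one unit only while it has *slack*: either its last non-idle
period is of type `(0, 1)`, whose deficit is repaid at the next `r'`-success by (b), or it
contains a period of type `(1, 1)`, after which the sequences agree by (a). Conversely a new
`(0, 1)` period is impossible while the prefix has slack, so the deficit never reaches `2`.
-/

namespace ReusableAllocation

def HasOpenDeficit (r r' : ℕ → ℕ) (n : ℕ) : Prop :=
  ∃ i, 1 ≤ i ∧ i ≤ n ∧ r i = 0 ∧ r' i = 1 ∧ ∀ t, i < t → t ≤ n → r t = 0 ∧ r' t = 0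

def HasJointSuccess (r r' : ℕ → ℕ) (n : ℕ) : Prop :=
  ∃ i, 1 ≤ i ∧ i ≤ n ∧ r i = 1 ∧ r' i = 1

def HasSlack (r r' : ℕ → ℕ) (n : ℕ) : Prop :=
  HasOpenDeficit r r' n ∨ HasJointSuccess r r' n

variable {r r' : ℕ → ℕ} {n : ℕ}

theorem HasSlack.succ_of_idle (h : HasSlack r r' n) (hr : r (n + 1) = 0)
    (hr' : r' (n + 1) = 0) : HasSlack r r' (n + 1) := by
  rcases h with ⟨i, hi1, hin, hri, hri', hidle⟩ | ⟨i, hi1, hin, hri, hri'⟩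
  · refine Or.inl ⟨i, hi1, by omega, hri, hri', fun t hit htn => ?_⟩
    rcases Nat.lt_or_eq_of_le htn with htn | rfl
    · exact hidle t hit (by omega)
    · exact ⟨hr, hr'⟩
  · exact Or.inr ⟨i, hi1, by omega, hri, hri'⟩

theorem hasSlack_succ_of_deficit (hr : r (n + 1) = 0) (hr' : r' (n + 1) = 1) :
    HasSlack r r' (n + 1) :=
  Or.inl ⟨n + 1, by omega, le_rfl, hr, hr', fun _ h₁ h₂ => absurd h₂ (by omega)⟩

theorem hasSlack_succ_of_joint (hr : r (n + 1) = 1) (hr' : r' (n + 1) = 1) :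
    HasSlack r r' (n + 1) :=
  Or.inr ⟨n + 1, by omega, le_rfl, hr, hr'⟩

theorem not_hasSlack_of_deficit {N : ℕ}
    (ha : ∀ i, 1 ≤ i → i ≤ N → r i = 1 → r' i = 1 →
      ∀ j, i ≤ j → j ≤ N → r j = r' j)
    (hb : ∀ i j, 1 ≤ i → i < j → j ≤ N → r i = 0 → r' i = 1 →
      (∀ t, i < t → t < j → r t = 0 ∧ r' t = 0) → r' j = 1 → r j = 1)
    (hnN : n + 1 ≤ N) (hr : r (n + 1) = 0) (hr' : r' (n + 1) = 1) :
    ¬ HasSlack r r' n := by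
  rintro (⟨i, hi1, hin, hri, hri', hidle⟩ | ⟨i, hi1, hin, hri, hri'⟩)
  · have := hb i (n + 1) hi1 (by omega) hnN hri hri' (fun t hit htn => hidle t hit (by omega)) hr'
    omega
  · have := ha i hi1 (by omega) hri hri' (n + 1) (by omega) hnN
    omega

theorem sum_le_sum_add_one_and_le_of_not_hasSlack {N : ℕ} (hr : ∀ i, r i ≤ 1) (hr' : ∀ i, r' i ≤ 1)
    (ha : ∀ i, 1 ≤ i → i ≤ N → r i = 1 → r' i = 1 →
      ∀ j, i ≤ j → j ≤ N → r j = r' j)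
    (hb : ∀ i j, 1 ≤ i → i < j → j ≤ N → r i = 0 → r' i = 1 →
      (∀ t, i < t → t < j → r t = 0 ∧ r' t = 0) → r' j = 1 → r j = 1)
    (hnN : n ≤ N) :
    ∑ i ∈ Finset.Icc 1 n, r' i ≤ ∑ i ∈ Finset.Icc 1 n, r i + 1 ∧
      (¬ HasSlack r r' n → ∑ i ∈ Finset.Icc 1 n, r' i ≤ ∑ i ∈ Finset.Icc 1 n, r i) := by
  induction n with
  | zero => simp
  | succ n ih =>
    obtain ⟨ih, ih_tight⟩ := ih (by omega)
    rw [Finset.sum_Icc_succ_top (by omega), Finset.sum_Icc_succ_top (by omega)]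
    rcases Nat.le_one_iff_eq_zero_or_eq_one.mp (hr (n + 1)) with h | h <;>
      rcases Nat.le_one_iff_eq_zero_or_eq_one.mp (hr' (n + 1)) with h' | h'
    · refine ⟨by omega, fun hs => ?_⟩
      have := ih_tight fun hs' => hs (hs'.succ_of_idle h h')
      omega
    · have := ih_tight (not_hasSlack_of_deficit ha hb hnN h h')
      exact ⟨by omega, fun hs => absurd (hasSlack_succ_of_deficit h h') hs⟩
    · omega
    · exact ⟨by omega, fun hs => absurd (hasSlack_succ_of_joint h h') hs⟩

end ReusableAllocation

open ReusableAllocation in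
theorem stmt_15_general (N : ℕ) (r r' : ℕ → ℕ)
    (hr : ∀ i, r i ≤ 1) (hr' : ∀ i, r' i ≤ 1)
    (ha : ∀ i, 1 ≤ i → i ≤ N → r i = 1 → r' i = 1 →
      ∀ j, i ≤ j → j ≤ N → r j = r' j)
    (hb : ∀ i j, 1 ≤ i → i < j → j ≤ N → r i = 0 → r' i = 1 →
      (∀ t, i < t → t < j → r t = 0 ∧ r' t = 0) → r' j = 1 → r j = 1) :
    ((∑ i ∈ Finset.Icc 1 N, r i : ℕ) : ℤ)
      ≥ ((∑ i ∈ Finset.Icc 1 N, r' i : ℕ) : ℤ) - 1 := by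
  have := (sum_le_sum_add_one_and_le_of_not_hasSlack hr hr' ha hb le_rfl).1
  omega

/-- Abstract combinatorial core of the strong-Lipschitz proof for reusable resource
allocation (Observation EC.3): for binary sequences `r, r'` on `{1,…,N}` such that
(a) once both succeed at a period all subsequent values coincide,
(b) between two successes of `r'` with no intermediate success of either, `r` must
also succeed at the later period, and
(c) `r j ≥ r' j` whenever `(r j, r' j) ≠ (0, 1)`,
the totals satisfy `Σ r ≥ Σ r' - 1`. -/
theorem stmt_15 (N : ℕ) (r r' : ℕ → ℕ)
    (hr : ∀ i, r i ≤ 1) (hr' : ∀ i, r' i ≤ 1)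
    (ha : ∀ i, 1 ≤ i → i ≤ N → r i = 1 → r' i = 1 →
      ∀ j, i ≤ j → j ≤ N → r j = r' j)
    (hb : ∀ i j, 1 ≤ i → i < j → j ≤ N → r i = 0 → r' i = 1 →
      (∀ t, i < t → t < j → r t = 0 ∧ r' t = 0) → r' j = 1 → r j = 1)
    (hc : ∀ j, 1 ≤ j → j ≤ N → ¬(r j = 0 ∧ r' j = 1) → r' j ≤ r j) :
    ((∑ i ∈ Finset.Icc 1 N, r i : ℕ) : ℤ)
      ≥ ((∑ i ∈ Finset.Icc 1 N, r' i : ℕ) : ℤ) - 1 :=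
  stmt_15_general N r r' hr hr' ha hb
end

section
/- Suppose a problem P is (u,v)-Lipschitz with per-period reward bound L, metric d on requests, and let b = u, c ≥ v, and define the truncated distance d̂(e,e') = min(d(e,e'), c/b). If at every step after history I one executes the first action of an optimal plan computed under the assumption that all future requests equal the predictions e*_{m+1:∞}, and the real and predicted sequences differ in finitely many coordinates, then the realized cumulative reward satisfies Val(P^I, e_{m+1:∞}, a_{m+1:∞}) ≥ Opt(P^I, e*_{m+1:∞}) - bL·Σ_{i≥m+1} d̂(e_i, e*_i). -/
/-- Hindsight optimum of the partial problem after history `(e_{1:m}, a_{1:m})`. -/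
noncomputable def OptVal {E A : ℕ → Type*}
    (R : (t : ℕ) → (∀ s, E s) → (∀ s, A s) → ℝ)
    (e : ∀ s, E s) (a : ∀ s, A s) (m n : ℕ) : ℝ :=
  ⨆ a' : {a' : ∀ s, A s // ∀ s, s ≤ m → a' s = a s},
    ∑ t ∈ Finset.Icc (m + 1) n, R t e a'.1

/-- The sequence equal to `e` up to period `k` and to `f` afterwards. -/
def splice {E : ℕ → Type*} (k : ℕ) (e f : ∀ s, E s) : ∀ s, E s :=
  fun s => if s ≤ k then e s else f s

/-
While the predictions are right, re-optimizing against them loses nothing: executing the first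
action of an optimal plan for the spliced requests `splice t e e*` splits the optimum from `t - 1`
into the reward collected at `t` plus the optimum from `t`. Moving the splice point from `t - 1`
to `t` replaces the single request `e*_t` by `e_t`, which by the Lipschitz property changes the
remaining optimum by at most `L·min(u·d, v) ≤ bL·d̂`. Telescoping over `t = m + 1, …, M` gives
the bound.
-/

open Finset

theorem Finset.sum_Icc_eq_add_sum_Icc_succ {M : Type*} [AddCommMonoid M] {a b : ℕ} (hab : a ≤ b)
    (g : ℕ → M) : ∑ t ∈ Icc a b, g t = g a + ∑ t ∈ Icc (a + 1) b, g t := by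
  rw [← add_sum_Ioc_eq_sum_Icc hab, ← Icc_add_one_left_eq_Ioc]

section ReoptimizationBound

variable {E A : ℕ → Type*}

def IsNonanticipative (R : (t : ℕ) → (∀ s, E s) → (∀ s, A s) → ℝ) : Prop :=
  ∀ (t : ℕ) (e e' : ∀ s, E s) (a a' : ∀ s, A s),
    (∀ s, s ≤ t → e s = e' s) → (∀ s, s ≤ t → a s = a' s) → R t e a = R t e' a'

/-- The paper's `(u, v)`-Lipschitz property with per-period reward bound `L`. -/
def IsOptLipschitz (R : (t : ℕ) → (∀ s, E s) → (∀ s, A s) → ℝ)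
    (d : (t : ℕ) → E t → E t → ℝ) (L u v : ℝ) : Prop :=
  ∀ (m n : ℕ) (e e' : ∀ s, E s) (a : ∀ s, A s), m ≤ n →
    (∀ s, s ≠ m + 1 → e s = e' s) →
    |OptVal R e a m n - OptVal R e' a m n| ≤ L * min (u * d (m + 1) (e (m + 1)) (e' (m + 1))) v

/-- The actions `a` follow the policy that, at every period `t > m`, plays the first action of
a plan that is optimal on `[t, n]` when the requests after `t` are taken to be the predictions
`f`. -/
def IsReoptimizing (R : (t : ℕ) → (∀ s, E s) → (∀ s, A s) → ℝ)
    (e f : ∀ s, E s) (a : ∀ s, A s) (m n : ℕ) : Prop :=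
  ∀ t, m < t → ∃ a' : ∀ s, A s, (∀ s, s ≤ t → a' s = a s) ∧
    ∀ a'' : ∀ s, A s, (∀ s, s < t → a'' s = a s) →
      ∑ w ∈ Icc t n, R w (splice t e f) a'' ≤ ∑ w ∈ Icc t n, R w (splice t e f) a'

variable {R : (t : ℕ) → (∀ s, E s) → (∀ s, A s) → ℝ} {e f : ∀ s, E s} {a : ∀ s, A s}
  {k m n : ℕ}

theorem IsReoptimizing.succ (h : IsReoptimizing R e f a m n) :
    IsReoptimizing R e f a (m + 1) n :=
  fun t ht => h t (by omega)

@[simp]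
theorem splice_succ_apply_succ : splice (k + 1) e f (k + 1) = e (k + 1) := by
  simp [splice]

@[simp]
theorem splice_apply_succ : splice k e f (k + 1) = f (k + 1) := by
  simp [splice]

theorem splice_succ_apply_of_ne {s : ℕ} (hs : s ≠ k + 1) :
    splice (k + 1) e f s = splice k e f s := by
  unfold splice
  split_ifs <;> first | rfl | omega

theorem IsNonanticipative.apply_splice_self (hR : IsNonanticipative R) (t : ℕ) (a : ∀ s, A s) :
    R t (splice t e f) a = R t e a :=
  hR t _ _ a a (fun _ hs => if_pos hs) fun _ _ => rfl

theorem OptVal_eq_zero_of_le (h : n ≤ m) : OptVal R e a m n = 0 := by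
  have : Nonempty {a' : ∀ s, A s // ∀ s, s ≤ m → a' s = a s} := ⟨⟨a, fun _ _ => rfl⟩⟩
  simp [OptVal, Icc_eq_empty_of_lt (Nat.lt_succ_of_le h)]

theorem OptVal_le {x : ℝ}
    (h : ∀ a' : ∀ s, A s, (∀ s, s ≤ m → a' s = a s) → ∑ t ∈ Icc (m + 1) n, R t e a' ≤ x) :
    OptVal R e a m n ≤ x :=
  have : Nonempty {a' : ∀ s, A s // ∀ s, s ≤ m → a' s = a s} := ⟨⟨a, fun _ _ => rfl⟩⟩
  ciSup_le fun a' => h a'.1 a'.2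

theorem le_OptVal {L : ℝ} (hbound : ∀ t e a, R t e a ≤ L) {a' : ∀ s, A s}
    (ha' : ∀ s, s ≤ m → a' s = a s) : ∑ t ∈ Icc (m + 1) n, R t e a' ≤ OptVal R e a m n := by
  refine le_ciSup (f := fun a' : {a' : ∀ s, A s // ∀ s, s ≤ m → a' s = a s} =>
    ∑ t ∈ Icc (m + 1) n, R t e a'.1) ⟨#(Icc (m + 1) n) • L, ?_⟩ ⟨a', ha'⟩
  rintro _ ⟨a'', rfl⟩
  exact sum_le_card_nsmul _ _ L fun t _ => hbound t e a''.1

theorem OptVal_le_add_OptVal_succ (hR : IsNonanticipative R) {L : ℝ}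
    (hbound : ∀ t e a, R t e a ≤ L) (hmn : m < n) {a' : ∀ s, A s}
    (ha' : ∀ s, s ≤ m + 1 → a' s = a s)
    (hopt : ∀ a'' : ∀ s, A s, (∀ s, s < m + 1 → a'' s = a s) →
      ∑ t ∈ Icc (m + 1) n, R t e a'' ≤ ∑ t ∈ Icc (m + 1) n, R t e a') :
    OptVal R e a m n ≤ R (m + 1) e a + OptVal R e a (m + 1) n := by
  have hfirst : R (m + 1) e a' = R (m + 1) e a := hR _ _ _ _ _ (fun _ _ => rfl) ha'
  refine OptVal_le fun a'' ha'' => ?_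
  calc ∑ t ∈ Icc (m + 1) n, R t e a''
      ≤ ∑ t ∈ Icc (m + 1) n, R t e a' := hopt a'' fun s hs => ha'' s (by omega)
    _ ≤ R (m + 1) e a + OptVal R e a (m + 1) n := by
      rw [sum_Icc_eq_add_sum_Icc_succ hmn, hfirst]
      exact add_le_add_right (le_OptVal hbound ha') _

theorem OptVal_splice_le_sum_add (hR : IsNonanticipative R) {L : ℝ}
    (hbound : ∀ t e a, R t e a ≤ L) {δ : ℕ → ℝ} (hre : IsReoptimizing R e f a m n)
    (hδ : ∀ t, m ≤ t → t < n →
      OptVal R (splice t e f) a t n ≤ OptVal R (splice (t + 1) e f) a t n + δ (t + 1)) :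
    OptVal R (splice m e f) a m n
      ≤ ∑ t ∈ Icc (m + 1) n, R t e a + ∑ t ∈ Icc (m + 1) n, δ t := by
  induction hk : n - m generalizing m with
  | zero =>
    simp [OptVal_eq_zero_of_le (show n ≤ m by omega), Icc_eq_empty_of_lt (show n < m + 1 by omega)]
  | succ k ih =>
    have hmn : m < n := by omega
    obtain ⟨a', ha', hopt⟩ := hre (m + 1) m.lt_succ_self
    have hnext := OptVal_le_add_OptVal_succ hR hbound hmn ha' hopt
    rw [hR.apply_splice_self] at hnext
    have htail := ih hre.succ (fun t ht htn => hδ t (by omega) htn) (by omega)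
    rw [sum_Icc_eq_add_sum_Icc_succ hmn, sum_Icc_eq_add_sum_Icc_succ hmn]
    linarith [hδ m le_rfl hmn]

theorem OptVal_splice_le_OptVal_splice_succ_add {d : (t : ℕ) → E t → E t → ℝ} {L u v : ℝ}
    (hLip : IsOptLipschitz R d L u v) (hmn : m ≤ n) :
    OptVal R (splice m e f) a m n ≤ OptVal R (splice (m + 1) e f) a m n
      + L * min (u * d (m + 1) (e (m + 1)) (f (m + 1))) v := by
  have h := hLip m n (splice (m + 1) e f) (splice m e f) a hmn
    fun s hs => splice_succ_apply_of_ne hs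
  rw [splice_succ_apply_succ, splice_apply_succ, abs_sub_le_iff] at h
  linarith [h.2]

end ReoptimizationBound

theorem mul_min_mul_le_mul_mul_min_div {L b v c : ℝ} (hL : 0 ≤ L) (hb : 0 < b) (hvc : v ≤ c)
    (x : ℝ) : L * min (b * x) v ≤ b * L * min x (c / b) := by
  rw [mul_comm b L, mul_assoc, mul_min_of_nonneg _ _ hb.le, mul_div_cancel₀ c hb.ne']
  exact mul_le_mul_of_nonneg_left (min_le_min le_rfl hvc) hL

theorem stmt_16_general {E A : ℕ → Type*}
    (L u v b c : ℝ) (hL : 0 ≤ L) (hbu : b = u) (hb : 0 < b) (hvc : v ≤ c)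
    (R : (t : ℕ) → (∀ s, E s) → (∀ s, A s) → ℝ)
    (d : (t : ℕ) → E t → E t → ℝ)
    (hprefix : ∀ (t : ℕ) (e e' : ∀ s, E s) (a a' : ∀ s, A s),
      (∀ s, s ≤ t → e s = e' s) → (∀ s, s ≤ t → a s = a' s) → R t e a = R t e' a')
    (hbound : ∀ t e a, R t e a ∈ Set.Icc (0 : ℝ) L)
    (hLip : ∀ (m n : ℕ) (e e' : ∀ s, E s) (a : ∀ s, A s), m ≤ n →
      (∀ s, s ≠ m + 1 → e s = e' s) →
      |OptVal R e a m n - OptVal R e' a m n|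
        ≤ L * min (u * d (m + 1) (e (m + 1)) (e' (m + 1))) v)
    (m M : ℕ)
    (e estar : ∀ s, E s)
    (a : ∀ s, A s)
    (hgreedy : ∀ t, m < t → ∃ a' : ∀ s, A s,
      (∀ s, s ≤ t → a' s = a s) ∧
      ∀ a'' : ∀ s, A s, (∀ s, s < t → a'' s = a s) →
        (∑ w ∈ Finset.Icc t M, R w (splice t e estar) a'')
          ≤ ∑ w ∈ Finset.Icc t M, R w (splice t e estar) a') :
    (∑ t ∈ Finset.Icc (m + 1) M, R t e a)
      ≥ OptVal R (splice m e estar) a m M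
        - b * L * ∑ i ∈ Finset.Icc (m + 1) M, min (d i (e i) (estar i)) (c / b) := by
  subst hbu
  have key := OptVal_splice_le_sum_add (δ := fun i => b * L * min (d i (e i) (estar i)) (c / b))
    hprefix (fun t e a => (hbound t e a).2) hgreedy fun t _ htM =>
      (OptVal_splice_le_OptVal_splice_succ_add hLip htM.le).trans
        (add_le_add_right (mul_min_mul_le_mul_mul_min_div hL hb hvc _) _)
  rw [← Finset.mul_sum] at key
  linarith

/-- Iterated re-optimization against predictions (Lemma EC.3): with `b = u`, `c ≥ v`
and the truncated distance `d̂ = min(d, c/b)`, if at every step after the history one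
executes the first action of an optimal plan computed as if all future requests were
the predictions `e*`, then the realized reward is at least
`Opt(P^I, e*_{m+1:∞}) - bL·Σ_i d̂(e_i, e*_i)`. -/
theorem stmt_16 {E A : ℕ → Type*}
    (L u v b c : ℝ) (hL : 0 ≤ L) (hbu : b = u) (hb : 0 < b) (hvc : v ≤ c)
    (R : (t : ℕ) → (∀ s, E s) → (∀ s, A s) → ℝ)
    (d : (t : ℕ) → E t → E t → ℝ)
    (hprefix : ∀ (t : ℕ) (e e' : ∀ s, E s) (a a' : ∀ s, A s),
      (∀ s, s ≤ t → e s = e' s) → (∀ s, s ≤ t → a s = a' s) → R t e a = R t e' a')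
    (hbound : ∀ t e a, R t e a ∈ Set.Icc (0 : ℝ) L)
    (hdnn : ∀ t x y, 0 ≤ d t x y) (hdself : ∀ t (x : E t), d t x x = 0)
    (hLip : ∀ (m n : ℕ) (e e' : ∀ s, E s) (a : ∀ s, A s), m ≤ n →
      (∀ s, s ≠ m + 1 → e s = e' s) →
      |OptVal R e a m n - OptVal R e' a m n|
        ≤ L * min (u * d (m + 1) (e (m + 1)) (e' (m + 1))) v)
    (m M : ℕ) (hmM : m ≤ M)
    (e estar : ∀ s, E s)
    (hfin : ∀ t, M < t → ∀ (e'' : ∀ s, E s) (a'' : ∀ s, A s), R t e'' a'' = 0)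
    (hagree : ∀ t, M < t → e t = estar t)
    (a : ∀ s, A s)
    (hgreedy : ∀ t, m < t → ∃ a' : ∀ s, A s,
      (∀ s, s ≤ t → a' s = a s) ∧
      ∀ a'' : ∀ s, A s, (∀ s, s < t → a'' s = a s) →
        (∑ w ∈ Finset.Icc t M, R w (splice t e estar) a'')
          ≤ ∑ w ∈ Finset.Icc t M, R w (splice t e estar) a') :
    (∑ t ∈ Finset.Icc (m + 1) M, R t e a)
      ≥ OptVal R (splice m e estar) a m M
        - b * L * ∑ i ∈ Finset.Icc (m + 1) M, min (d i (e i) (estar i)) (c / b) :=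
  stmt_16_general L u v b c hL hbu hb hvc R d hprefix hbound hLip m M e estar a hgreedy
end

section
/- Under the same hypotheses as the previous statement, and assuming additionally that P is f-bounded-influence with f ≤ c, the two-sided comparison to the true hindsight optimum holds over any finite window: Val(P^I, e_{m+1:m+n}, a_{m+1:m+n}) ≥ Opt(P^I, e_{m+1:m+n}) - 2bL·Σ_{i=m+1}^{m+n} d̂(e_i, e*_i) - cL. -/
open Finset

section Splice

variable {E : ℕ → Type*} {k s : ℕ} {e f : ∀ s, E s}

theorem splice_of_le (h : s ≤ k) : splice k e f s = e s := if_pos h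

theorem splice_of_lt (h : k < s) : splice k e f s = f s := if_neg (not_le.2 h)

theorem splice_succ_of_ne (h : s ≠ k + 1) : splice (k + 1) e f s = splice k e f s := by
  rcases le_or_gt s k with hs | hs
  · rw [splice_of_le hs, splice_of_le (by omega)]
  · rw [splice_of_lt hs, splice_of_lt (by omega)]

end Splice

theorem Finset.sum_Icc_succ_split {M : Type*} [AddCommMonoid M] (g : ℕ → M) {m k n : ℕ}
    (hmk : m ≤ k) (hkn : k ≤ n) :
    ∑ i ∈ Icc (m + 1) n, g i = ∑ i ∈ Icc (m + 1) k, g i + ∑ i ∈ Icc (k + 1) n, g i := by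
  simp only [Icc_add_one_left_eq_Ioc]
  exact (sum_Ioc_consecutive g hmk hkn).symm

theorem le_add_sum_Icc_of_le_succ {g c : ℕ → ℝ} {m n : ℕ}
    (h : ∀ k, m ≤ k → k < m + n → g k ≤ g (k + 1) + c (k + 1)) :
    g m ≤ g (m + n) + ∑ i ∈ Icc (m + 1) (m + n), c i := by
  induction n with
  | zero => simp
  | succ n ih =>
    rw [← add_assoc, sum_Icc_succ_top (by omega)]
    linarith [ih fun k hk hkn => h k hk (by omega), h (m + n) (by omega) (by omega)]

theorem mul_min_le_mul_min_div {L b c v x : ℝ} (hL : 0 ≤ L) (hb : 0 < b) (hvc : v ≤ c) :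
    L * min (b * x) v ≤ b * L * min x (c / b) :=
  calc L * min (b * x) v ≤ L * min (b * x) c := by gcongr
    _ = b * L * min x (c / b) := by
      rw [mul_comm b L, mul_assoc, mul_min_of_nonneg _ _ hb.le, mul_div_cancel₀ _ hb.ne']

section OptVal

variable {E A : ℕ → Type*}

def OptValLipschitzNext (R : (t : ℕ) → (∀ s, E s) → (∀ s, A s) → ℝ)
    (d : (t : ℕ) → E t → E t → ℝ) (L u v : ℝ) : Prop :=
  ∀ (m n : ℕ) (e e' : ∀ s, E s) (a : ∀ s, A s), m ≤ n → (∀ s, s ≠ m + 1 → e s = e' s) →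
    |OptVal R e a m n - OptVal R e' a m n| ≤ L * min (u * d (m + 1) (e (m + 1)) (e' (m + 1))) v

variable {R : (t : ℕ) → (∀ s, E s) → (∀ s, A s) → ℝ} {L : ℝ}
  {e e' : ∀ s, E s} {a a' : ∀ s, A s} {m k N : ℕ}

theorem optVal_le {X : ℝ}
    (h : ∀ a', (∀ s, s ≤ m → a' s = a s) → ∑ t ∈ Icc (m + 1) N, R t e a' ≤ X) :
    OptVal R e a m N ≤ X :=
  haveI : Nonempty {a' : ∀ s, A s // ∀ s, s ≤ m → a' s = a s} := ⟨⟨a, fun _ _ => rfl⟩⟩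
  ciSup_le fun a' => h a'.1 a'.2

theorem sum_le_optVal (hR : ∀ t e a, R t e a ≤ L) (ha' : ∀ s, s ≤ m → a' s = a s) :
    ∑ t ∈ Icc (m + 1) N, R t e a' ≤ OptVal R e a m N := by
  refine le_ciSup (f := fun b : {b : ∀ s, A s // ∀ s, s ≤ m → b s = a s} =>
    ∑ t ∈ Icc (m + 1) N, R t e b.1) ⟨#(Icc (m + 1) N) • L, ?_⟩ ⟨a', ha'⟩
  rintro _ ⟨b, rfl⟩
  exact sum_le_card_nsmul _ _ _ fun t _ => hR t e b.1

theorem optVal_congr (hR : IsNonanticipative R) (he : ∀ s, s ≤ N → e s = e' s)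
    (ha : ∀ s, s ≤ m → a s = a' s) : OptVal R e a m N = OptVal R e' a' m N := by
  unfold OptVal iSup
  congr 1
  ext x
  constructor <;> rintro ⟨⟨b, hb⟩, rfl⟩
  · refine ⟨⟨b, fun s hs => (hb s hs).trans (ha s hs)⟩, sum_congr rfl fun t ht => ?_⟩
    exact hR t e' e b b (fun s hs => (he s (hs.trans (mem_Icc.1 ht).2)).symm) fun _ _ => rfl
  · refine ⟨⟨b, fun s hs => (hb s hs).trans (ha s hs).symm⟩, sum_congr rfl fun t ht => ?_⟩
    exact hR t e e' b b (fun s hs => he s (hs.trans (mem_Icc.1 ht).2)) fun _ _ => rfl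

theorem sum_add_optVal_le_optVal (hR : ∀ t e a, R t e a ≤ L) (hcausal : IsNonanticipative R)
    (hmk : m ≤ k) (hkN : k ≤ N) (ha' : ∀ s, s ≤ m → a' s = a s) :
    ∑ t ∈ Icc (m + 1) k, R t e a' + OptVal R e a' k N ≤ OptVal R e a m N := by
  rw [← le_sub_iff_add_le']
  refine optVal_le fun b hb => le_sub_iff_add_le'.2 ?_
  have hwin : ∑ t ∈ Icc (m + 1) k, R t e a' = ∑ t ∈ Icc (m + 1) k, R t e b :=
    sum_congr rfl fun t ht =>
      hcausal t e e a' b (fun _ _ => rfl) fun s hs => (hb s (hs.trans (mem_Icc.1 ht).2)).symm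
  rw [hwin, ← sum_Icc_succ_split _ hmk hkN]
  exact sum_le_optVal hR fun s hs => (hb s (hs.trans hmk)).trans (ha' s hs)

theorem optVal_le_of_sum_add_optVal_le (hR : ∀ t e a, R t e a ≤ L) (hmk : m ≤ k) (hkN : k ≤ N)
    {X : ℝ} (h : ∀ a', (∀ s, s ≤ m → a' s = a s) →
      ∑ t ∈ Icc (m + 1) k, R t e a' + OptVal R e a' k N ≤ X) :
    OptVal R e a m N ≤ X :=
  optVal_le fun b hb => by
    rw [sum_Icc_succ_split _ hmk hkN]
    linarith [sum_le_optVal hR (e := e) (m := k) (N := N) (a := b) (a' := b) fun _ _ => rfl, h b hb]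

theorem optVal_le_optVal_add_of_tail (hR : ∀ t e a, R t e a ≤ L)
    (hcausal : IsNonanticipative R) (hmk : m ≤ k) (hkN : k ≤ N) (he : ∀ s, s ≤ k → e s = e' s)
    {δ : ℝ} (h : ∀ b, OptVal R e b k N ≤ OptVal R e' b k N + δ) :
    OptVal R e a m N ≤ OptVal R e' a m N + δ :=
  optVal_le_of_sum_add_optVal_le hR hmk hkN fun b hb => by
    have hwin : ∑ t ∈ Icc (m + 1) k, R t e b = ∑ t ∈ Icc (m + 1) k, R t e' b :=
      sum_congr rfl fun t ht =>
        hcausal t e e' b b (fun s hs => he s (hs.trans (mem_Icc.1 ht).2)) fun _ _ => rfl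
    linarith [h b, sum_add_optVal_le_optVal hR hcausal hmk hkN hb (e := e')]

theorem optVal_le_optVal_add_sum (hR : ∀ t e a, R t e a ≤ L) (hcausal : IsNonanticipative R)
    {d : (t : ℕ) → E t → E t → ℝ} {u v : ℝ} (hLip : OptValLipschitzNext R d L u v) {n : ℕ}
    (he : ∀ s, s ≤ m → e s = e' s) :
    OptVal R e a m (m + n) ≤
      OptVal R e' a m (m + n) + ∑ i ∈ Icc (m + 1) (m + n), L * min (u * d i (e i) (e' i)) v := by
  have hfirst : OptVal R e a m (m + n) = OptVal R (splice m e' e) a m (m + n) :=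
    optVal_congr hcausal (fun s _ => by
      rcases le_or_gt s m with hs | hs
      · rw [splice_of_le hs, he s hs]
      · rw [splice_of_lt hs]) fun _ _ => rfl
  have hlast : OptVal R (splice (m + n) e' e) a m (m + n) = OptVal R e' a m (m + n) :=
    optVal_congr hcausal (fun _ hs => splice_of_le hs) fun _ _ => rfl
  rw [hfirst, ← hlast]
  refine le_add_sum_Icc_of_le_succ (g := fun k => OptVal R (splice k e' e) a m (m + n))
    fun k hmk hkn => optVal_le_optVal_add_of_tail hR hcausal hmk hkn.le
      (fun s hs => by rw [splice_of_le hs, splice_of_le (by omega)]) fun b => ?_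
  have hk := hLip k (m + n) (splice k e' e) (splice (k + 1) e' e) b hkn.le
    fun s hs => (splice_succ_of_ne hs).symm
  rw [splice_of_lt (lt_add_one k), splice_of_le le_rfl] at hk
  linarith [(abs_le.1 hk).2]

theorem optVal_add_optVal_le_optVal_add (hR : ∀ t e a, R t e a ≤ L)
    (hcausal : IsNonanticipative R) (hmk : m ≤ k) (hkN : k ≤ N) {C : ℝ}
    (h : ∀ b, OptVal R e' a k N ≤ OptVal R e b k N + C) :
    OptVal R e a m k + OptVal R e' a k N ≤ OptVal R e a m N + C := by
  have : OptVal R e a m k ≤ OptVal R e a m N + C - OptVal R e' a k N :=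
    optVal_le fun b hb => by
      linarith [sum_add_optVal_le_optVal hR hcausal hmk hkN hb (e := e), h b]
  linarith

theorem optVal_le_sum_add_optVal_of_le_sum (hR : ∀ t e a, R t e a ≤ L)
    (hcausal : IsNonanticipative R) (hmk : m ≤ k) (hkN : k ≤ N) (ha' : ∀ s, s ≤ k → a' s = a s)
    (hopt : OptVal R e a m N ≤ ∑ t ∈ Icc (m + 1) N, R t e a') :
    OptVal R e a m N ≤ ∑ t ∈ Icc (m + 1) k, R t e a + OptVal R e a k N := by
  have hwin : ∑ t ∈ Icc (m + 1) k, R t e a' = ∑ t ∈ Icc (m + 1) k, R t e a :=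
    sum_congr rfl fun t ht =>
      hcausal t e e a' a (fun _ _ => rfl) fun s hs => ha' s (hs.trans (mem_Icc.1 ht).2)
  rw [sum_Icc_succ_split _ hmk hkN] at hopt
  linarith [sum_le_optVal hR ha' (e := e) (N := N)]

theorem optVal_splice_le_sum_add_optVal_splice (hR : ∀ t e a, R t e a ≤ L)
    (hcausal : IsNonanticipative R) {d : (t : ℕ) → E t → E t → ℝ} {u v : ℝ}
    (hLip : OptValLipschitzNext R d L u v) {n M : ℕ} (hmn : m + n ≤ M) (estar : ∀ s, E s)
    (hreopt : ∀ t, m < t → ∃ a' : ∀ s, A s, (∀ s, s ≤ t → a' s = a s) ∧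
      ∀ a'' : ∀ s, A s, (∀ s, s < t → a'' s = a s) →
        ∑ w ∈ Icc t M, R w (splice t e estar) a'' ≤ ∑ w ∈ Icc t M, R w (splice t e estar) a') :
    OptVal R (splice m e estar) a m M ≤ OptVal R (splice (m + n) e estar) a (m + n) M +
      ∑ i ∈ Icc (m + 1) (m + n), (R i e a + L * min (u * d i (e i) (estar i)) v) := by
  refine le_add_sum_Icc_of_le_succ (g := fun t => OptVal R (splice t e estar) a t M)
    fun t hmt htn => ?_
  obtain ⟨a', ha', hbest⟩ := hreopt (t + 1) (by omega)
  have hopt : OptVal R (splice (t + 1) e estar) a t M ≤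
      ∑ w ∈ Icc (t + 1) M, R w (splice (t + 1) e estar) a' :=
    optVal_le fun b hb => hbest b fun s hs => hb s (by omega)
  have hstep := optVal_le_sum_add_optVal_of_le_sum hR hcausal (Nat.le_succ t) (by omega) ha' hopt
  rw [Icc_self, sum_singleton,
    hcausal _ _ e _ a (fun s hs => splice_of_le hs) fun _ _ => rfl] at hstep
  have hk := hLip t M (splice (t + 1) e estar) (splice t e estar) a (by omega)
    fun s hs => splice_succ_of_ne hs
  rw [splice_of_le le_rfl, splice_of_lt (lt_add_one t)] at hk
  linarith [(abs_le.1 hk).1]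

end OptVal

theorem stmt_17_general {E A : ℕ → Type*}
    (L u v b c f : ℝ) (hL : 0 ≤ L) (hbu : b = u) (hb : 0 < b) (hvc : v ≤ c)
    (hfc : f ≤ c)
    (R : (t : ℕ) → (∀ s, E s) → (∀ s, A s) → ℝ)
    (d : (t : ℕ) → E t → E t → ℝ)
    (hprefix : ∀ (t : ℕ) (e e' : ∀ s, E s) (a a' : ∀ s, A s),
      (∀ s, s ≤ t → e s = e' s) → (∀ s, s ≤ t → a s = a' s) → R t e a = R t e' a')
    (hbound : ∀ t e a, R t e a ∈ Set.Icc (0 : ℝ) L)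
    (hLip : ∀ (m' n' : ℕ) (e e' : ∀ s, E s) (a : ∀ s, A s), m' ≤ n' →
      (∀ s, s ≠ m' + 1 → e s = e' s) →
      |OptVal R e a m' n' - OptVal R e' a m' n'|
        ≤ L * min (u * d (m' + 1) (e (m' + 1)) (e' (m' + 1))) v)
    (hBI : ∀ (m' n' : ℕ) (e1 e2 : ∀ s, E s) (a1 a2 : ∀ s, A s),
      (∀ s, m' < s → e1 s = e2 s) →
      |OptVal R e1 a1 m' n' - OptVal R e2 a2 m' n'| ≤ f * L)
    (m n M : ℕ) (hmn : m + n ≤ M)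
    (e estar : ∀ s, E s)
    (a : ∀ s, A s)
    (hgreedy : ∀ t, m < t → ∃ a' : ∀ s, A s,
      (∀ s, s ≤ t → a' s = a s) ∧
      ∀ a'' : ∀ s, A s, (∀ s, s < t → a'' s = a s) →
        (∑ w ∈ Finset.Icc t M, R w (splice t e estar) a'')
          ≤ ∑ w ∈ Finset.Icc t M, R w (splice t e estar) a') :
    (∑ t ∈ Finset.Icc (m + 1) (m + n), R t e a)
      ≥ OptVal R e a m (m + n)
        - 2 * b * L * ∑ i ∈ Finset.Icc (m + 1) (m + n), min (d i (e i) (estar i)) (c / b)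
        - c * L := by
  subst hbu
  have hR : ∀ t e a, R t e a ≤ L := fun t e a => (hbound t e a).2
  have hreveal := optVal_le_optVal_add_sum hR hprefix hLip (e := e) (e' := splice m e estar)
    (a := a) (n := n) fun s hs => (splice_of_le hs).symm
  rw [sum_congr rfl fun i hi => by rw [splice_of_lt (mem_Icc.1 hi).1]] at hreveal
  have hreopt := optVal_splice_le_sum_add_optVal_splice hR hprefix hLip hmn estar hgreedy
  have hsplit := optVal_add_optVal_le_optVal_add (e := splice m e estar)
    (e' := splice (m + n) e estar) (a := a) (C := c * L) hR hprefix (Nat.le_add_right m n) hmn fun a' => by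
      have hinfl := hBI (m + n) M (splice m e estar) (splice (m + n) e estar) a' a
        fun s hs => by rw [splice_of_lt (by omega), splice_of_lt hs]
      linarith [(abs_le.1 hinfl).1, mul_le_mul_of_nonneg_right hfc hL]
  have hcost : ∑ i ∈ Icc (m + 1) (m + n), L * min (b * d i (e i) (estar i)) v ≤
      b * L * ∑ i ∈ Icc (m + 1) (m + n), min (d i (e i) (estar i)) (c / b) := by
    rw [mul_sum]
    exact sum_le_sum fun i _ => mul_min_le_mul_min_div hL hb hvc
  rw [sum_add_distrib] at hreopt
  linarith

/-- Predictive-epoch regret bound (Lemma 2): under the (u,v)-Lipschitz hypothesis,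
the f-bounded-influence hypothesis with `f ≤ c`, and iterated re-optimization against
the predictions `e*`, on any finite window the realized reward compares to the true
hindsight optimum: `Val ≥ Opt - 2bL·Σ d̂(e_i, e*_i) - cL`. -/
theorem stmt_17 {E A : ℕ → Type*}
    (L u v b c f : ℝ) (hL : 0 ≤ L) (hbu : b = u) (hb : 0 < b) (hvc : v ≤ c)
    (hfc : f ≤ c)
    (R : (t : ℕ) → (∀ s, E s) → (∀ s, A s) → ℝ)
    (d : (t : ℕ) → E t → E t → ℝ)
    (hprefix : ∀ (t : ℕ) (e e' : ∀ s, E s) (a a' : ∀ s, A s),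
      (∀ s, s ≤ t → e s = e' s) → (∀ s, s ≤ t → a s = a' s) → R t e a = R t e' a')
    (hbound : ∀ t e a, R t e a ∈ Set.Icc (0 : ℝ) L)
    (hdnn : ∀ t x y, 0 ≤ d t x y) (hdself : ∀ t (x : E t), d t x x = 0)
    (hLip : ∀ (m' n' : ℕ) (e e' : ∀ s, E s) (a : ∀ s, A s), m' ≤ n' →
      (∀ s, s ≠ m' + 1 → e s = e' s) →
      |OptVal R e a m' n' - OptVal R e' a m' n'|
        ≤ L * min (u * d (m' + 1) (e (m' + 1)) (e' (m' + 1))) v)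
    (hBI : ∀ (m' n' : ℕ) (e1 e2 : ∀ s, E s) (a1 a2 : ∀ s, A s),
      (∀ s, m' < s → e1 s = e2 s) →
      |OptVal R e1 a1 m' n' - OptVal R e2 a2 m' n'| ≤ f * L)
    (m n M : ℕ) (hmn : m + n ≤ M)
    (e estar : ∀ s, E s)
    (hfin : ∀ t, M < t → ∀ (e'' : ∀ s, E s) (a'' : ∀ s, A s), R t e'' a'' = 0)
    (hagree : ∀ t, M < t → e t = estar t)
    (a : ∀ s, A s)
    (hgreedy : ∀ t, m < t → ∃ a' : ∀ s, A s,
      (∀ s, s ≤ t → a' s = a s) ∧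
      ∀ a'' : ∀ s, A s, (∀ s, s < t → a'' s = a s) →
        (∑ w ∈ Finset.Icc t M, R w (splice t e estar) a'')
          ≤ ∑ w ∈ Finset.Icc t M, R w (splice t e estar) a') :
    (∑ t ∈ Finset.Icc (m + 1) (m + n), R t e a)
      ≥ OptVal R e a m (m + n)
        - 2 * b * L * ∑ i ∈ Finset.Icc (m + 1) (m + n), min (d i (e i) (estar i)) (c / b)
        - c * L :=
  stmt_17_general L u v b c f hL hbu hb hvc hfc R d hprefix hbound hLip hBI m n M hmn e estar a
    hgreedy
end

section
/- Let η ∈ (0,1], ε ∈ (0,η), c ≥ b ≥ 1, L > 0, and let a sequence of epoch values be given: odd epochs i earn at least (η-ε)·V*_i + 10cL·I(i<N) - 2cL·I(i>1), and even epochs earn at least η·V*_i - 8cL, where V*_i ≥ 0 are the optimal epoch values summing to Opt. Then the total earned reward is at least (η-ε)·Opt. -/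
/-!
Even epochs lose at most `8cL` against `η·V*ᵢ ≥ (η-ε)·V*ᵢ`, and odd epochs lose `2cL` but, except
for the last epoch, gain `10cL`. Read left to right, the partial sums of these per-epoch balances
alternate between `10cL` (after an odd epoch) and `2cL` (after an even one), so subtracting the
`10cL` that a final odd epoch does not earn still leaves a nonnegative total.
-/

open Finset

/-- The surplus of epoch `i` with the indicator `i < N` replaced by `1`; the last epoch is
corrected separately. -/
noncomputable def epochBalance (K : ℝ) (i : ℕ) : ℝ :=
  if Odd i then 10 * K - 2 * K * (if 1 < i then 1 else 0) else -(8 * K)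

theorem sum_Icc_epochBalance (K : ℝ) : ∀ N : ℕ,
    ∑ i ∈ Icc 1 N, epochBalance K i = if Odd N then 10 * K else if N = 0 then 0 else 2 * K
  | 0 => by simp
  | N + 1 => by
    rw [sum_Icc_succ_top (by omega), sum_Icc_epochBalance K N]
    rcases Nat.even_or_odd N with hN | hN
    · have hN' : ¬Odd N := Nat.not_odd_iff_even.mpr hN
      rcases Nat.eq_zero_or_pos N with rfl | hpos
      · simp [epochBalance]
      · simp [epochBalance, hN', hN.add_one, hpos.ne', Nat.lt_add_left_iff_pos.mpr hpos]
    · have hN' : ¬Odd (N + 1) := Nat.not_odd_iff_even.mpr hN.add_one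
      simp only [hN, ↓reduceIte, epochBalance, hN', Nat.add_eq_zero_iff, one_ne_zero, and_false]
      ring

theorem sum_Icc_epochBalance_sub_nonneg {K : ℝ} (hK : 0 ≤ K) (N : ℕ) :
    0 ≤ ∑ i ∈ Icc 1 N, (epochBalance K i - if i = N ∧ Odd i then 10 * K else 0) := by
  simp only [sum_sub_distrib, ite_and, sum_ite_eq', sum_Icc_epochBalance, mem_Icc]
  split_ifs <;> linarith

theorem stmt_18_general (η ε b c L : ℝ)
    (hε : 0 < ε) (hb : 1 ≤ b) (hbc : b ≤ c) (hL : 0 < L)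
    (N : ℕ) (V earn : ℕ → ℝ) (hV : ∀ i, 0 ≤ V i)
    (Opt : ℝ) (hOpt : ∑ i ∈ Finset.Icc 1 N, V i = Opt)
    (hodd : ∀ i ∈ Finset.Icc 1 N, Odd i →
      earn i ≥ (η - ε) * V i + 10 * c * L * (if i < N then 1 else 0)
        - 2 * c * L * (if 1 < i then 1 else 0))
    (heven : ∀ i ∈ Finset.Icc 1 N, Even i → earn i ≥ η * V i - 8 * c * L) :
    ∑ i ∈ Finset.Icc 1 N, earn i ≥ (η - ε) * Opt := by
  have hpt : ∀ i ∈ Icc 1 N,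
      (η - ε) * V i + (epochBalance (c * L) i - if i = N ∧ Odd i then 10 * (c * L) else 0)
        ≤ earn i := by
    intro i hi
    have hiN : i ≤ N := (mem_Icc.mp hi).2
    rcases Nat.even_or_odd i with he | ho
    · have h_earn := heven i hi he
      have h_slack := mul_nonneg hε.le (hV i)
      simp only [epochBalance, Nat.not_odd_iff_even.mpr he, and_false, if_false]
      linarith
    · have h_earn := hodd i hi ho
      simp only [epochBalance, ho, and_true, if_true] at h_earn ⊢
      split_ifs at h_earn ⊢ <;> first | omega | linarith
  calc (η - ε) * Opt
      ≤ ∑ i ∈ Icc 1 N, ((η - ε) * V i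
          + (epochBalance (c * L) i - if i = N ∧ Odd i then 10 * (c * L) else 0)) := by
        rw [sum_add_distrib, ← mul_sum, hOpt]
        linarith [sum_Icc_epochBalance_sub_nonneg (mul_nonneg (by linarith : (0:ℝ) ≤ c) hL.le) N]
    _ ≤ ∑ i ∈ Icc 1 N, earn i := sum_le_sum hpt

/-- Robustness aggregation step of Theorem 1 (AdaSwitch with a 1-offline oracle):
with η ∈ (0,1], ε ∈ (0,η), c ≥ b ≥ 1, L > 0, if over `N` epochs the earned rewards
satisfy `earn i ≥ (η-ε)·V i + 10cL·I(i<N) - 2cL·I(i>1)` at odd epochs and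
`earn i ≥ η·V i - 8cL` at even epochs, where the nonnegative optimal epoch values
`V i` sum to `Opt`, then the total earned reward is at least `(η-ε)·Opt`. -/
theorem stmt_18 (η ε b c L : ℝ) (hη0 : 0 < η) (hη1 : η ≤ 1)
    (hε : 0 < ε) (hεη : ε < η) (hb : 1 ≤ b) (hbc : b ≤ c) (hL : 0 < L)
    (N : ℕ) (V earn : ℕ → ℝ) (hV : ∀ i, 0 ≤ V i)
    (Opt : ℝ) (hOpt : ∑ i ∈ Finset.Icc 1 N, V i = Opt)
    (hodd : ∀ i ∈ Finset.Icc 1 N, Odd i →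
      earn i ≥ (η - ε) * V i + 10 * c * L * (if i < N then 1 else 0)
        - 2 * c * L * (if 1 < i then 1 else 0))
    (heven : ∀ i ∈ Finset.Icc 1 N, Even i → earn i ≥ η * V i - 8 * c * L) :
    ∑ i ∈ Finset.Icc 1 N, earn i ≥ (η - ε) * Opt :=
  stmt_18_general η ε b c L hε hb hbc hL N V earn hV Opt hOpt hodd heven
end
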